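/- Let 0 < p < 2, let w be a nonnegative locally integrable function on ℝⁿ, let k₀ ∈ ℤ, and let A, c, c₀ > 0. Suppose that for each integer k ≤ k₀ and each index i, b^k_i is a measurable function supported in a cube Q^k_i with ‖b^k_i‖_{L^∞} ≤ A·2^k, Σ_i w(Q^k_i) ≤ c·2^{−kp}, and Σ_i χ_{Q^k_i}(x) ≤ c₀ for all x ∈ ℝⁿ. Then the function F₁ = Σ_{k=−∞}^{k₀} Σ_i b^k_i satisfies ‖F₁‖_{L²_w} ≤ C·A·c₀^{1/2}·c^{1/2}·2^{k₀(1−p/2)}, where C depends only on p. -/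

import Mathlib

open MeasureTheory Set Filter
open scoped ENNReal NNReal Topology

noncomputable section

/-- Euclidean space `ℝⁿ`. -/
abbrev En (n : ℕ) := EuclideanSpace ℝ (Fin n)

/-- The cube centered at `x₀` with side length `r`, sides parallel to the axes. -/
def cube {n : ℕ} (x₀ : En n) (r : ℝ) : Set (En n) := {x | ∀ i, |x i - x₀ i| ≤ r / 2}

/-- Weighted measure of a set: `w(E) = ∫_E w`. -/
def wMeas {n : ℕ} (w : En n → ℝ) (S : Set (En n)) : ℝ≥0∞ := ∫⁻ x in S, ENNReal.ofReal (w x)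

/-- A weight: a nonnegative locally integrable function. -/
def IsWeight {n : ℕ} (w : En n → ℝ) : Prop := (∀ x, 0 ≤ w x) ∧ LocallyIntegrable w volume

/-- Average of `g` over a set. -/
def avgOn {n : ℕ} (g : En n → ℝ) (S : Set (En n)) : ℝ := (volume S).toReal⁻¹ * ∫ x in S, g x

/-- The Muckenhoupt `A_1` condition. -/
def IsA1 {n : ℕ} (w : En n → ℝ) : Prop :=
  ∃ C : ℝ, ∀ (x₀ : En n) (r : ℝ), 0 < r →
    avgOn w (cube x₀ r) ≤ C * essInf w (volume.restrict (cube x₀ r))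

/-- The Muckenhoupt `A_q` condition for `1 < q`, with constant `C`. -/
def IsAqStrictWith {n : ℕ} (q : ℝ) (w : En n → ℝ) (C : ℝ) : Prop :=
  ∀ (x₀ : En n) (r : ℝ), 0 < r →
    avgOn w (cube x₀ r) * (avgOn (fun x => w x ^ (-(1 / (q - 1)))) (cube x₀ r)) ^ (q - 1) ≤ C

/-- The Muckenhoupt `A_q` condition for `1 < q`. -/
def IsAqStrict {n : ℕ} (q : ℝ) (w : En n → ℝ) : Prop := ∃ C : ℝ, IsAqStrictWith q w C

/-- The Muckenhoupt class `A_q` for `q ≥ 1`. -/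
def IsAq {n : ℕ} (q : ℝ) (w : En n → ℝ) : Prop :=
  IsWeight w ∧ ((q = 1 ∧ IsA1 w) ∨ (1 < q ∧ IsAqStrict q w))

/-- The class `A_∞`. -/
def IsAinfty {n : ℕ} (w : En n → ℝ) : Prop := ∃ q : ℝ, 1 < q ∧ IsAq q w

/-- The critical index `q_w = inf {q > 1 : w ∈ A_q}`. -/
def criticalIndex {n : ℕ} (w : En n → ℝ) : ℝ := sInf {q : ℝ | 1 < q ∧ IsAq q w}

/-- The reverse Hölder class `RH_s`. -/
def IsRH {n : ℕ} (s : ℝ) (w : En n → ℝ) : Prop :=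
  IsWeight w ∧ ∃ C : ℝ, 0 < C ∧ ∀ (x₀ : En n) (r : ℝ), 0 < r →
    (avgOn (fun x => w x ^ s) (cube x₀ r)) ^ (1 / s) ≤ C * avgOn w (cube x₀ r)

/-- The weighted weak-`L^p` quasinorm of an `ℝ≥0∞`-valued function. -/
def wkNormE {n : ℕ} (w : En n → ℝ) (p : ℝ) (g : En n → ℝ≥0∞) : ℝ≥0∞ :=
  ⨆ (t : ℝ) (_ : 0 < t), ENNReal.ofReal t * (wMeas w {x | ENNReal.ofReal t < g x}) ^ (1 / p)

/-- The weighted weak-`L^p` quasinorm `‖f‖_{WL^p_w} = sup_{λ>0} λ w({|f|>λ})^{1/p}`. -/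
def wkNorm {n : ℕ} (w : En n → ℝ) (p : ℝ) (f : En n → ℝ) : ℝ≥0∞ :=
  wkNormE w p (fun x => (‖f x‖₊ : ℝ≥0∞))

/-- `N = [n(q_w/p - 1)]`. -/
def NIndex {n : ℕ} (w : En n → ℝ) (p : ℝ) : ℕ := Nat.floor ((n : ℝ) * (criticalIndex w / p - 1))

/-- The test class `𝒜_{N,w}` of Schwartz functions with normalized derivatives. -/
def calA (n : ℕ) (w : En n → ℝ) (p : ℝ) : Set (SchwartzMap (En n) ℝ) :=
  {φ | ∀ x : En n, ∀ k : ℕ, k ≤ NIndex w p + 1 →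
      (1 + ‖x‖) ^ (NIndex w p + n + 1) * ‖iteratedFDeriv ℝ k (φ : En n → ℝ) x‖ ≤ 1}

/-- The grand maximal function of a (locally integrable) function:
`G_w f(x) = sup_{φ ∈ 𝒜_{N,w}} sup_{|y-x|<t} |(φ_t * f)(y)|`, where `φ_t(x) = t^{-n} φ(x/t)`. -/
def grandMaxFn (n : ℕ) (w : En n → ℝ) (p : ℝ) (f : En n → ℝ) (x : En n) : ℝ≥0∞ :=
  ⨆ (φ : SchwartzMap (En n) ℝ) (_ : φ ∈ calA n w p) (t : ℝ) (_ : 0 < t) (y : En n)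
    (_ : dist y x < t),
    (‖∫ z, t ^ (-(n : ℝ)) * φ (t⁻¹ • (y - z)) * f z‖₊ : ℝ≥0∞)

/-- The grand maximal function of a tempered distribution `f`:
`G_w f(x) = sup_{φ ∈ 𝒜_{N,w}} sup_{|y-x|<t} |(φ_t * f)(y)|`, where
`(φ_t * f)(y) = ⟨f, t^{-n} φ((y - ·)/t)⟩`. -/
def grandMaxDist (n : ℕ) (w : En n → ℝ) (p : ℝ) (f : SchwartzMap (En n) ℝ →L[ℝ] ℝ)
    (x : En n) : ℝ≥0∞ :=
  ⨆ (φ : SchwartzMap (En n) ℝ) (_ : φ ∈ calA n w p) (t : ℝ) (_ : 0 < t) (y : En n)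
    (_ : dist y x < t) (ψ : SchwartzMap (En n) ℝ)
    (_ : ∀ z, (ψ : En n → ℝ) z = t ^ (-(n : ℝ)) * φ (t⁻¹ • (y - z))),
    (‖f ψ‖₊ : ℝ≥0∞)

/-- The weighted weak Hardy quasinorm of a function. -/
def WHpNormFn (n : ℕ) (w : En n → ℝ) (p : ℝ) (f : En n → ℝ) : ℝ≥0∞ :=
  wkNormE w p (grandMaxFn n w p f)

/-- The weighted weak Hardy quasinorm of a tempered distribution. -/
def WHpNormDist (n : ℕ) (w : En n → ℝ) (p : ℝ) (f : SchwartzMap (En n) ℝ →L[ℝ] ℝ) : ℝ≥0∞ :=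
  wkNormE w p (grandMaxDist n w p f)

/-- The normalized surface measure `dσ` on the unit sphere `S^{n-1}`. -/
def sigmaN (n : ℕ) : Measure (Metric.sphere (0 : En n) 1) :=
  ((volume : Measure (En n)).toSphere Set.univ)⁻¹ • (volume : Measure (En n)).toSphere

/-- `sup_{y' ∈ S^{n-1}, |y'-z'| ≤ δ} |Ω(x+ρz', y') - Ω(x+ρz', z')|`. -/
def omegaSupIn (n : ℕ) (Ω : En n → En n → ℝ) (δ : ℝ) (x : En n) (ρ : ℝ) (z' : En n) : ℝ :=
  sSup {a : ℝ | ∃ y' : En n, ‖y'‖ = 1 ∧ ‖y' - z'‖ ≤ δ ∧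
    a = |Ω (x + ρ • z') y' - Ω (x + ρ • z') z'|}

/-- The integral modulus of continuity of order `r` of `Ω`. -/
def omegaR (n : ℕ) (r : ℝ) (Ω : En n → En n → ℝ) (δ : ℝ) : ℝ :=
  sSup {a : ℝ | ∃ (x : En n) (ρ : ℝ), 0 ≤ ρ ∧
    a = (∫ z' : Metric.sphere (0 : En n) 1,
          omegaSupIn n Ω δ x ρ (z' : En n) ^ r ∂(sigmaN n)) ^ (1 / r)}

/-- The `L^{r,β}`-Dini condition on a variable kernel `Ω(x,z)`:
homogeneity of degree `0` in `z`, vanishing mean on the sphere, uniform `L^r` bound on the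
sphere along shifted centers, and the Dini integral `∫₀¹ ω_r(δ)/δ^{1+β} dδ < ∞`. -/
def LrDini (n : ℕ) (r β : ℝ) (Ω : En n → En n → ℝ) : Prop :=
  (∀ (x z : En n) (c : ℝ), 0 < c → Ω x (c • z) = Ω x z) ∧
  (∀ x : En n, ∫ z' : Metric.sphere (0 : En n) 1, Ω x (z' : En n) ∂(sigmaN n) = 0) ∧
  (∃ M : ℝ, ∀ (x : En n) (ρ : ℝ), 0 ≤ ρ →
    (∫ z' : Metric.sphere (0 : En n) 1,
        |Ω (x + ρ • (z' : En n)) (z' : En n)| ^ r ∂(sigmaN n)) ^ (1 / r) ≤ M) ∧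
  IntegrableOn (fun δ : ℝ => omegaR n r Ω δ / δ ^ (1 + β)) (Set.Ioo (0 : ℝ) 1)

/-- The kernel `K(x,z) = Ω(x, z/|z|)/|z|ⁿ`. -/
def Kker (n : ℕ) (Ω : En n → En n → ℝ) (x z : En n) : ℝ := Ω x (‖z‖⁻¹ • z) / ‖z‖ ^ n

/-- Condition (1.2): the `L^r`-Hörmander condition in the second variable. -/
def Hormander12 (n : ℕ) (r : ℝ) (Ω : En n → En n → ℝ) : Prop :=
  ∀ R : ℝ, 0 < R → ∃ B : ℝ, ∀ (x y : En n), 0 < ‖y‖ → ‖y‖ < R → ∀ N : ℕ,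
    ∑ k ∈ Finset.Icc 1 N, ((2 : ℝ) ^ k * R) ^ ((n : ℝ) / (r / (r - 1))) *
      (∫ z in {z : En n | 2 ^ k * R ≤ ‖z‖ ∧ ‖z‖ < 2 ^ (k + 1) * R},
        |Kker n Ω x (z - y) - Kker n Ω x z| ^ r) ^ (1 / r) ≤ B

/-- Condition (1.3): the `L^r`-Hörmander condition in the first variable. -/
def Hormander13 (n : ℕ) (r : ℝ) (Ω : En n → En n → ℝ) : Prop :=
  ∀ R : ℝ, 0 < R → ∃ B : ℝ, ∀ (x y : En n), 0 < ‖x - y‖ → ‖x - y‖ < R → ∀ N : ℕ,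
    ∑ k ∈ Finset.Icc 1 N, ((2 : ℝ) ^ k * R) ^ ((n : ℝ) / (r / (r - 1))) *
      (∫ z in {z : En n | 2 ^ k * R ≤ ‖z‖ ∧ ‖z‖ < 2 ^ (k + 1) * R},
        |Kker n Ω x z - Kker n Ω y z| ^ r) ^ (1 / r) ≤ B

end

/-!
Split `F₁ = ∑_k F_k` with `F_k = ∑_i b^k_i`. Bounded overlap gives
`|F_k| ≤ A 2^k ∑_i χ_{Q^k_i} ≤ c₀ A 2^k`, so
`‖F_k‖²_{L²_w} ≤ (A 2^k)² c₀ ∑_i w(Q^k_i) ≤ A² c₀ c 2^{k(2-p)}`.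
Minkowski's inequality for the countable sum over `k ≤ k₀` leaves the geometric series
`∑_{k ≤ k₀} 2^{k(1-p/2)} = 2^{k₀(1-p/2)} / (1 - 2^{p/2-1})`, which converges because `p < 2`.
-/

theorem tsum_indicator_one_le {α ι : Type*} {S : ι → Set α} {N : ℝ≥0∞}
    (h : ∀ (x : α) (s : Finset ι), (∀ i ∈ s, x ∈ S i) → (s.card : ℝ≥0∞) ≤ N) (x : α) :
    ∑' i, (S i).indicator 1 x ≤ N := by
  classical
  rw [ENNReal.tsum_eq_iSup_sum]
  refine iSup_le fun s => ?_
  have hcard : ∑ i ∈ s, (S i).indicator 1 x = ((s.filter (x ∈ S ·)).card : ℝ≥0∞) := by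
    simp [indicator_apply]
  exact hcard ▸ h x _ fun i hi => (Finset.mem_filter.1 hi).2

section LpBounds

variable {α : Type*} [MeasurableSpace α] {μ : Measure α}

theorem eLpNorm'_tsum_le {ι : Type*} [Countable ι] {f : ι → α → ℝ≥0∞}
    (hf : ∀ i, AEMeasurable (f i) μ) {q : ℝ} (hq : 1 ≤ q) :
    eLpNorm' (fun x => ∑' i, f i x) q μ ≤ ∑' i, eLpNorm' (f i) q μ := by
  have hq0 : 0 < q := zero_lt_one.trans_le hq
  have rpow_iSup (r : ℝ) (hr : 0 < r) (a : Finset ι → ℝ≥0∞) : (⨆ s, a s) ^ r = ⨆ s, a s ^ r :=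
    (ENNReal.orderIsoRpow r hr).map_iSup a
  have hmono : Monotone fun (s : Finset ι) x => (∑ i ∈ s, f i x) ^ q := fun s t hst x =>
    ENNReal.rpow_le_rpow (Finset.sum_le_sum_of_subset hst) hq0.le
  calc eLpNorm' (fun x => ∑' i, f i x) q μ
      = ⨆ s : Finset ι, eLpNorm' (∑ i ∈ s, f i) q μ := by
        simp only [eLpNorm'_eq_lintegral_enorm, enorm_eq_self, ENNReal.tsum_eq_iSup_sum,
          rpow_iSup q hq0]
        rw [lintegral_iSup_directed
          (fun s => (Finset.aemeasurable_fun_sum s fun i _ => hf i).pow_const q)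
          hmono.directed_le, rpow_iSup _ (one_div_pos.2 hq0)]
        simp only [Finset.sum_apply]
    _ ≤ ∑' i, eLpNorm' (f i) q μ := iSup_le fun s =>
        (eLpNorm'_sum_le (fun i _ => (hf i).aestronglyMeasurable) hq).trans
          (ENNReal.sum_le_tsum s)

theorem eLpNorm'_two_tsum_enorm_le {ι E : Type*} [Countable ι] [NormedAddCommGroup E]
    {f : ι → α → E} {S : ι → Set α} (hS : ∀ i, MeasurableSet (S i))
    (hfS : ∀ i, Function.support (f i) ⊆ S i) {M N W : ℝ≥0∞} (hM : ∀ i, eLpNorm (f i) ∞ μ ≤ M)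
    (hN : ∀ x, ∑' i, (S i).indicator 1 x ≤ N) (hW : ∑' i, μ (S i) ≤ W) :
    eLpNorm' (fun x => ∑' i, ‖f i x‖ₑ) 2 μ ≤ M * (N * W) ^ (1 / 2 : ℝ) := by
  set cnt : α → ℝ≥0∞ := fun x => ∑' i, (S i).indicator 1 x
  have hpt : ∀ᵐ x ∂μ, ∑' i, ‖f i x‖ₑ ≤ M * cnt x := by
    have hM' : ∀ᵐ x ∂μ, ∀ i, ‖f i x‖ₑ ≤ M := ae_all_iff.2 fun i =>
      (enorm_ae_le_eLpNormEssSup (f i) μ).mono fun x hx =>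
        hx.trans (eLpNorm_exponent_top.ge.trans (hM i))
    filter_upwards [hM'] with x hx
    rw [← ENNReal.tsum_mul_left]
    refine ENNReal.tsum_le_tsum fun i => ?_
    by_cases hxi : x ∈ S i
    · simpa [hxi] using hx i
    · simp [indicator_of_notMem hxi, Function.notMem_support.1 fun h => hxi (hfS i h)]
  have hcnt_meas : Measurable cnt :=
    Measurable.tsum fun i => measurable_one.indicator (hS i)
  have hcnt : ∫⁻ x, cnt x ∂μ = ∑' i, μ (S i) := by
    rw [lintegral_tsum fun i => (measurable_one.indicator (hS i)).aemeasurable]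
    simp [lintegral_indicator_one (hS _)]
  have hsq : ∫⁻ x, (∑' i, ‖f i x‖ₑ) ^ (2 : ℝ) ∂μ ≤ M ^ 2 * (N * W) := calc
      ∫⁻ x, (∑' i, ‖f i x‖ₑ) ^ (2 : ℝ) ∂μ ≤ ∫⁻ x, M ^ 2 * (N * cnt x) ∂μ := by
        refine lintegral_mono_ae (hpt.mono fun x hx => ?_)
        calc (∑' i, ‖f i x‖ₑ) ^ (2 : ℝ) ≤ (M * cnt x) ^ 2 := by
              rw [ENNReal.rpow_two]; gcongr
          _ = M ^ 2 * (cnt x * cnt x) := by ring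
          _ ≤ M ^ 2 * (N * cnt x) := by gcongr; exact hN x
      _ ≤ M ^ 2 * (N * W) := by
        rw [lintegral_const_mul _ (hcnt_meas.const_mul N), lintegral_const_mul _ hcnt_meas, hcnt]
        gcongr
  calc eLpNorm' (fun x => ∑' i, ‖f i x‖ₑ) 2 μ
      = (∫⁻ x, (∑' i, ‖f i x‖ₑ) ^ (2 : ℝ) ∂μ) ^ (1 / 2 : ℝ) := by
        simp only [eLpNorm'_eq_lintegral_enorm, enorm_eq_self]
    _ ≤ (M ^ 2 * (N * W)) ^ (1 / 2 : ℝ) := by gcongr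
    _ = M * (N * W) ^ (1 / 2 : ℝ) := by
        rw [ENNReal.mul_rpow_of_nonneg _ _ (by norm_num), ← ENNReal.rpow_natCast,
          ← ENNReal.rpow_mul]
        norm_num

theorem eLpNorm'_withDensity_ofReal {E : Type*} [NormedAddCommGroup E] {w : α → ℝ}
    (hw : AEMeasurable w μ) (f : α → E) (q : ℝ) :
    eLpNorm' f q (μ.withDensity fun x => ENNReal.ofReal (w x)) =
      (∫⁻ x, ‖f x‖ₑ ^ q * ENNReal.ofReal (w x) ∂μ) ^ (1 / q) := by
  rw [eLpNorm'_eq_lintegral_enorm, lintegral_withDensity_eq_lintegral_mul_non_measurable₀ _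
    hw.ennreal_ofReal (ae_of_all _ fun _ => ENNReal.ofReal_lt_top)]
  simp only [Pi.mul_apply, mul_comm]

end LpBounds

theorem isClosed_cube {n : ℕ} (x₀ : En n) (r : ℝ) : IsClosed (cube x₀ r) := by
  simp only [cube, ofPred_forall]
  exact isClosed_iInter fun i => isClosed_le (by fun_prop) continuous_const

theorem wMeas_eq_withDensity {n : ℕ} (w : En n → ℝ) (S : Set (En n)) :
    wMeas w S = volume.withDensity (fun x => ENNReal.ofReal (w x)) S :=
  (withDensity_apply' _ S).symm

theorem hasSum_two_rpow_mul_subtype_le {s : ℝ} (hs : 0 < s) (k₀ : ℤ) :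
    HasSum (fun k : {m : ℤ // m ≤ k₀} => (2 : ℝ) ^ ((k : ℝ) * s))
      ((1 - 2 ^ (-s))⁻¹ * 2 ^ ((k₀ : ℝ) * s)) := by
  let e : ℕ ≃ {m : ℤ // m ≤ k₀} := Equiv.ofBijective (fun j => ⟨k₀ - j, by omega⟩)
    ⟨fun i j hij => by simpa using congrArg Subtype.val hij,
      fun k => ⟨(k₀ - k).toNat, Subtype.ext (by have := k.2; simp only [Int.ofNat_toNat]; omega)⟩⟩
  have hterm (j : ℕ) :
      (2 : ℝ) ^ (((e j : ℤ) : ℝ) * s) = 2 ^ ((k₀ : ℝ) * s) * (2 ^ (-s)) ^ j := by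
    show (2 : ℝ) ^ (((k₀ - j : ℤ) : ℝ) * s) = _
    rw [← Real.rpow_natCast, ← Real.rpow_mul zero_le_two, ← Real.rpow_add zero_lt_two]
    push_cast
    ring_nf
  rw [← e.hasSum_iff]
  simp only [Function.comp_def, hterm]
  rw [mul_comm ((1 - (2 : ℝ) ^ (-s))⁻¹)]
  exact (hasSum_geometric_of_lt_one (by positivity)
    (Real.rpow_lt_one_of_one_lt_of_neg one_lt_two (neg_neg_of_pos hs))).mul_left _

theorem tsum_ofReal_mul_two_rpow_subtype_le {s : ℝ} (hs : 0 < s) (k₀ : ℤ) {K : ℝ}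
    (hK : 0 ≤ K) :
    ∑' k : {m : ℤ // m ≤ k₀}, ENNReal.ofReal (K * 2 ^ ((k : ℝ) * s)) =
      ENNReal.ofReal ((1 - 2 ^ (-s))⁻¹ * K * 2 ^ ((k₀ : ℝ) * s)) := by
  have hsum := (hasSum_two_rpow_mul_subtype_le hs k₀).mul_left K
  rw [← ENNReal.ofReal_tsum_of_nonneg (fun k => by positivity) hsum.summable, hsum.tsum_eq]
  congr 1; ring

theorem two_zpow_mul_rpow_half_eq {k : ℤ} {p A c c₀ : ℝ} (hc : 0 ≤ c) (hc₀ : 0 ≤ c₀) :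
    A * 2 ^ k * (c₀ * (c * 2 ^ (-(k : ℝ) * p))) ^ (1 / 2 : ℝ) =
      A * c₀ ^ (1 / 2 : ℝ) * c ^ (1 / 2 : ℝ) * 2 ^ ((k : ℝ) * (1 - p / 2)) := by
  have h2 :
      (2 : ℝ) ^ ((k : ℝ) * (1 - p / 2)) = 2 ^ k * (2 ^ (-(k : ℝ) * p)) ^ (1 / 2 : ℝ) := by
    rw [← Real.rpow_intCast, ← Real.rpow_mul zero_le_two, ← Real.rpow_add zero_lt_two]
    ring_nf
  rw [Real.mul_rpow hc₀ (by positivity), Real.mul_rpow hc (by positivity), h2]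
  ring

theorem eLpNorm'_tsum_enorm_le_of_cubes {n : ℕ} {w : En n → ℝ} {p : ℝ} {k : ℤ}
    {A c c₀ : ℝ} (hA : 0 ≤ A) (hc : 0 ≤ c) (hc₀ : 0 ≤ c₀)
    {f : ℕ → En n → ℝ} {xc : ℕ → En n} {rc : ℕ → ℝ}
    (hfS : ∀ i, Function.support (f i) ⊆ cube (xc i) (rc i))
    (hf : ∀ i, eLpNorm (f i) ⊤ volume ≤ ENNReal.ofReal (A * 2 ^ k))
    (hw : ∑' i, wMeas w (cube (xc i) (rc i)) ≤
      ENNReal.ofReal (c * (2 : ℝ) ^ (-(k : ℝ) * p)))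
    (hover : ∀ (x : En n) (s : Finset ℕ), (∀ i ∈ s, x ∈ cube (xc i) (rc i)) →
      (s.card : ℝ) ≤ c₀) :
    eLpNorm' (fun x => ∑' i, ‖f i x‖ₑ) 2 (volume.withDensity fun x => ENNReal.ofReal (w x)) ≤
      ENNReal.ofReal
        (A * c₀ ^ (1 / 2 : ℝ) * c ^ (1 / 2 : ℝ) * 2 ^ ((k : ℝ) * (1 - p / 2))) := by
  calc _ ≤ ENNReal.ofReal (A * 2 ^ k) *
        (ENNReal.ofReal c₀ * ENNReal.ofReal (c * 2 ^ (-(k : ℝ) * p))) ^ (1 / 2 : ℝ) := by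
        refine eLpNorm'_two_tsum_enorm_le (fun i => (isClosed_cube _ _).measurableSet) hfS
          (fun i => ?_) (tsum_indicator_one_le fun x s hs => ?_) ?_
        · simp only [eLpNorm_exponent_top] at hf ⊢
          exact (eLpNormEssSup_mono_measure _
            (withDensity_absolutelyContinuous _ _)).trans (hf i)
        · rw [← ENNReal.ofReal_natCast]
          exact ENNReal.ofReal_le_ofReal (hover x s hs)
        · simpa only [wMeas_eq_withDensity] using hw
    _ = _ := by
        rw [← ENNReal.ofReal_mul hc₀,
          ENNReal.ofReal_rpow_of_nonneg (by positivity) (by norm_num),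
          ← ENNReal.ofReal_mul (by positivity), two_zpow_mul_rpow_half_eq hc hc₀]

theorem F1_weighted_L2_estimate_general (p : ℝ) (hp2 : p < 2) :
    ∃ C : ℝ, 0 < C ∧
      ∀ (n : ℕ) (w : En n → ℝ), IsWeight w →
      ∀ (k₀ : ℤ) (A c c₀ : ℝ), 0 < A → 0 < c → 0 < c₀ →
      ∀ (b : ℤ → ℕ → En n → ℝ) (xc : ℤ → ℕ → En n) (rc : ℤ → ℕ → ℝ),
        (∀ k ≤ k₀, ∀ i : ℕ, Measurable (b k i)) →
        (∀ k ≤ k₀, ∀ i : ℕ, Function.support (b k i) ⊆ cube (xc k i) (rc k i)) →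
        (∀ k ≤ k₀, ∀ i : ℕ, eLpNorm (b k i) ⊤ volume ≤ ENNReal.ofReal (A * 2 ^ k)) →
        (∀ k ≤ k₀, ∑' i : ℕ, wMeas w (cube (xc k i) (rc k i))
            ≤ ENNReal.ofReal (c * (2 : ℝ) ^ (-(k : ℝ) * p))) →
        (∀ k ≤ k₀, ∀ (x : En n) (s : Finset ℕ),
            (∀ i ∈ s, x ∈ cube (xc k i) (rc k i)) → (s.card : ℝ) ≤ c₀) →
        (∫⁻ x : En n,
            (‖∑' (k : {m : ℤ // m ≤ k₀}) (i : ℕ), b k.1 i x‖₊ : ℝ≥0∞) ^ (2 : ℝ) *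
              ENNReal.ofReal (w x)) ^ ((1 : ℝ) / 2)
          ≤ ENNReal.ofReal
              (C * A * c₀ ^ ((1 : ℝ) / 2) * c ^ ((1 : ℝ) / 2) *
                (2 : ℝ) ^ ((k₀ : ℝ) * (1 - p / 2))) := by
  have hs : 0 < 1 - p / 2 := by linarith
  refine ⟨(1 - 2 ^ (-(1 - p / 2)))⁻¹, inv_pos.2 (sub_pos.2
    (Real.rpow_lt_one_of_one_lt_of_neg one_lt_two (neg_neg_of_pos hs))), ?_⟩
  intro n w hw k₀ A c c₀ hA hc hc₀ b xc rc hbm hbS hb hwS hover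
  set μ := volume.withDensity fun x => ENNReal.ofReal (w x)
  set K := A * c₀ ^ (1 / 2 : ℝ) * c ^ (1 / 2 : ℝ)
  have hmeas (k : {m : ℤ // m ≤ k₀}) : AEMeasurable (fun x => ∑' i, ‖b k.1 i x‖ₑ) μ :=
    (Measurable.tsum fun i => (hbm k.1 k.2 i).enorm).aemeasurable
  have hlevel (k : {m : ℤ // m ≤ k₀}) : eLpNorm' (fun x => ∑' i, ‖b k.1 i x‖ₑ) 2 μ ≤
      ENNReal.ofReal (K * 2 ^ ((k : ℝ) * (1 - p / 2))) :=
    eLpNorm'_tsum_enorm_le_of_cubes hA.le hc.le hc₀.le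
      (hbS k.1 k.2) (hb k.1 k.2) (hwS k.1 k.2) (hover k.1 k.2)
  simp only [← enorm_eq_nnnorm]
  rw [← eLpNorm'_withDensity_ofReal hw.2.aestronglyMeasurable.aemeasurable]
  calc eLpNorm' (fun x => ∑' (k : {m : ℤ // m ≤ k₀}) (i : ℕ), b k.1 i x) 2 μ
      ≤ eLpNorm' (fun x => ∑' (k : {m : ℤ // m ≤ k₀}) (i : ℕ), ‖b k.1 i x‖ₑ) 2 μ :=
        eLpNorm'_mono_enorm_ae zero_le_two (ae_of_all _ fun x => by
          simpa only [enorm_eq_self] using enorm_tsum_le_tsum_enorm.trans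
            (ENNReal.tsum_le_tsum fun k => enorm_tsum_le_tsum_enorm))
    _ ≤ ∑' k : {m : ℤ // m ≤ k₀}, eLpNorm' (fun x => ∑' i, ‖b k.1 i x‖ₑ) 2 μ :=
        eLpNorm'_tsum_le hmeas (by norm_num)
    _ ≤ ∑' k : {m : ℤ // m ≤ k₀}, ENNReal.ofReal (K * 2 ^ ((k : ℝ) * (1 - p / 2))) :=
        ENNReal.tsum_le_tsum hlevel
    _ = _ := by
        rw [tsum_ofReal_mul_two_rpow_subtype_le hs k₀ (by positivity)]
        congr 1
        ring

/-- estimate (3.1): Let `0 < p < 2`.  There is `C > 0`, depending only on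
`p`, such that for any weight `w`, `k₀ ∈ ℤ`, `A, c, c₀ > 0` and functions `b^k_i` (for
`k ≤ k₀`) supported in cubes `Q^k_i` with `‖b^k_i‖_∞ ≤ A 2^k`, `Σ_i w(Q^k_i) ≤ c 2^{-kp}`
and overlap `Σ_i χ_{Q^k_i} ≤ c₀`, the function `F₁ = Σ_{k ≤ k₀} Σ_i b^k_i` satisfies
`‖F₁‖_{L²_w} ≤ C A c₀^{1/2} c^{1/2} 2^{k₀(1-p/2)}`. -/
theorem F1_weighted_L2_estimate (p : ℝ) (hp0 : 0 < p) (hp2 : p < 2) :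
    ∃ C : ℝ, 0 < C ∧
      ∀ (n : ℕ) (w : En n → ℝ), IsWeight w →
      ∀ (k₀ : ℤ) (A c c₀ : ℝ), 0 < A → 0 < c → 0 < c₀ →
      ∀ (b : ℤ → ℕ → En n → ℝ) (xc : ℤ → ℕ → En n) (rc : ℤ → ℕ → ℝ),
        (∀ k ≤ k₀, ∀ i : ℕ, Measurable (b k i)) →
        (∀ k ≤ k₀, ∀ i : ℕ, Function.support (b k i) ⊆ cube (xc k i) (rc k i)) →
        (∀ k ≤ k₀, ∀ i : ℕ, eLpNorm (b k i) ⊤ volume ≤ ENNReal.ofReal (A * 2 ^ k)) →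
        (∀ k ≤ k₀, ∑' i : ℕ, wMeas w (cube (xc k i) (rc k i))
            ≤ ENNReal.ofReal (c * (2 : ℝ) ^ (-(k : ℝ) * p))) →
        (∀ k ≤ k₀, ∀ (x : En n) (s : Finset ℕ),
            (∀ i ∈ s, x ∈ cube (xc k i) (rc k i)) → (s.card : ℝ) ≤ c₀) →
        (∫⁻ x : En n,
            (‖∑' (k : {m : ℤ // m ≤ k₀}) (i : ℕ), b k.1 i x‖₊ : ℝ≥0∞) ^ (2 : ℝ) *
              ENNReal.ofReal (w x)) ^ ((1 : ℝ) / 2)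
          ≤ ENNReal.ofReal
              (C * A * c₀ ^ ((1 : ℝ) / 2) * c ^ ((1 : ℝ) / 2) *
                (2 : ℝ) ^ ((k₀ : ℝ) * (1 - p / 2))) :=
  F1_weighted_L2_estimate_general p hp2
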